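/- For any a ∈ (-1,1), the derivative of the amplifier function φ satisfies φ'(a) = (√2 / (√π (1-a²)^{3/2})) · E[X² exp(-X²a²/(2(1-a²)))], where X is a bounded real random variable. -/

import Mathlib

open MeasureTheory Real

noncomputable def erf (x : ℝ) : ℝ := (2 / Real.sqrt π) * ∫ s in (0:ℝ)..x, Real.exp (-s ^ 2)

noncomputable def algInv (a : ℝ) : ℝ := a / Real.sqrt (1 - a ^ 2)

/-!
Differentiate under the integral sign. By the chain rule the integrand `x * erf (x * algInv a / √2)`
has `a`-derivative `√2 / (√π (1 - a²)^{3/2}) · x² exp (-x² a² / (2 (1 - a²)))`, which is jointly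
continuous on `(-1, 1) × ℝ`. Since `μ` lives on the compact interval `[-M, M]`, this derivative is
bounded uniformly for `a` in a compact neighbourhood, and dominated convergence applies.
-/

open Set Function Filter

theorem Continuous.integrable_of_ae_mem_compact {α E : Type*} [TopologicalSpace α] [T2Space α]
    [MeasurableSpace α] [OpensMeasurableSpace α] [NormedAddCommGroup E] {μ : Measure α}
    [IsFiniteMeasure μ] {K : Set α} (hK : IsCompact K) (hμK : ∀ᵐ x ∂μ, x ∈ K) {f : α → E}
    (hf : Continuous f) : Integrable f μ := by
  rw [← Measure.restrict_eq_self_of_ae_mem hμK]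
  exact hf.continuousOn.integrableOn_compact hK

theorem hasDerivAt_integral_of_continuousOn_of_ae_mem_compact {α E : Type*}
    [TopologicalSpace α] [T2Space α] [MeasurableSpace α] [OpensMeasurableSpace α]
    [NormedAddCommGroup E] [NormedSpace ℝ E] [SecondCountableTopologyEither α E]
    {μ : Measure α} [IsFiniteMeasure μ] {K : Set α} (hK : IsCompact K) (hμK : ∀ᵐ x ∂μ, x ∈ K)
    {F F' : ℝ → α → E} {U : Set ℝ} (hU : IsOpen U) {a : ℝ} (ha : a ∈ U)
    (hF : ∀ b ∈ U, Continuous (F b)) (hF' : ContinuousOn (uncurry F') (U ×ˢ univ))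
    (hF'_deriv : ∀ x, ∀ b ∈ U, HasDerivAt (F · x) (F' b x) b) :
    HasDerivAt (fun b => ∫ x, F b x ∂μ) (∫ x, F' a x ∂μ) a := by
  obtain ⟨ε, hε, hεU⟩ := Metric.nhds_basis_closedBall.mem_iff.mp (hU.mem_nhds ha)
  obtain ⟨C, hC⟩ := ((isCompact_closedBall a ε).prod hK).exists_bound_of_continuousOn
    (hF'.mono (prod_mono hεU (subset_univ K)))
  have hF'a : Continuous (F' a) :=
    hF'.comp_continuous (continuous_const.prodMk continuous_id) fun _ => ⟨ha, trivial⟩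
  refine (hasDerivAt_integral_of_dominated_loc_of_deriv_le (Metric.ball_mem_nhds a hε)
    (eventually_of_mem (hU.mem_nhds ha) fun b hb => (hF b hb).aestronglyMeasurable)
    ((hF a ha).integrable_of_ae_mem_compact hK hμK) hF'a.aestronglyMeasurable
    (bound := fun _ => C) ?_ (integrable_const C) ?_).2
  · filter_upwards [hμK] with x hx b hb
    exact hC (b, x) ⟨Metric.ball_subset_closedBall hb, hx⟩
  · exact ae_of_all _ fun x b hb => hF'_deriv x b (hεU (Metric.ball_subset_closedBall hb))

theorem hasDerivAt_erf (t : ℝ) : HasDerivAt erf (2 / √π * exp (-t ^ 2)) t := by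
  have hcont : Continuous fun s : ℝ => exp (-s ^ 2) := by fun_prop
  exact (intervalIntegral.integral_hasDerivAt_right (hcont.intervalIntegrable 0 t)
    (hcont.stronglyMeasurableAtFilter _ _) hcont.continuousAt).const_mul _

@[fun_prop]
theorem continuous_erf : Continuous erf :=
  continuous_iff_continuousAt.mpr fun t => (hasDerivAt_erf t).continuousAt

theorem Real.rpow_three_div_two_eq_sqrt_pow {t : ℝ} (ht : 0 ≤ t) : t ^ ((3:ℝ)/2) = √t ^ 3 := by
  rw [sqrt_eq_rpow, ← rpow_natCast, ← rpow_mul ht]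
  norm_num

theorem hasDerivAt_algInv {a : ℝ} (ha : a ^ 2 < 1) :
    HasDerivAt algInv ((1 - a ^ 2) ^ ((3:ℝ)/2))⁻¹ a := by
  have hpos : 0 < 1 - a ^ 2 := sub_pos.mpr ha
  have hsqrt : HasDerivAt (fun b : ℝ => √(1 - b ^ 2)) (-(2 * a) / (2 * √(1 - a ^ 2))) a := by
    simpa using ((hasDerivAt_pow 2 a).const_sub 1).sqrt hpos.ne'
  refine ((hasDerivAt_id a).div hsqrt (sqrt_pos.mpr hpos).ne').congr_deriv ?_
  have hsq : √(1 - a ^ 2) ^ 2 = 1 - a ^ 2 := sq_sqrt hpos.le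
  rw [rpow_three_div_two_eq_sqrt_pow hpos.le, id]
  field_simp
  linear_combination hsq

theorem sq_mul_algInv_div_sqrt_two (x : ℝ) {a : ℝ} (ha : a ^ 2 < 1) :
    (x * algInv a / √2) ^ 2 = x ^ 2 * a ^ 2 / (2 * (1 - a ^ 2)) := by
  rw [algInv, div_pow, mul_pow, div_pow, sq_sqrt (sub_pos.mpr ha).le, sq_sqrt zero_le_two]
  field_simp

theorem hasDerivAt_mul_erf_algInv (x : ℝ) {a : ℝ} (ha : a ^ 2 < 1) :
    HasDerivAt (fun b => x * erf (x * algInv b / √2))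
      (√2 / (√π * (1 - a ^ 2) ^ ((3:ℝ)/2)) *
        (x ^ 2 * exp (-(x ^ 2 * a ^ 2) / (2 * (1 - a ^ 2))))) a := by
  refine (((hasDerivAt_erf _).comp a
    (((hasDerivAt_algInv ha).const_mul x).div_const √2)).const_mul x).congr_deriv ?_
  have hP : 0 < (1 - a ^ 2) ^ ((3:ℝ)/2) := rpow_pos_of_pos (sub_pos.mpr ha) _
  rw [neg_div, ← sq_mul_algInv_div_sqrt_two x ha]
  field_simp
  rw [sq_sqrt zero_le_two]

theorem continuousOn_amplifier_deriv_integrand :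
    ContinuousOn (uncurry fun a x : ℝ => √2 / (√π * (1 - a ^ 2) ^ ((3:ℝ)/2)) *
      (x ^ 2 * exp (-(x ^ 2 * a ^ 2) / (2 * (1 - a ^ 2))))) (Ioo (-1) 1 ×ˢ univ) := by
  rintro ⟨a, x⟩ ⟨ha, -⟩
  have h : 0 < 1 - a ^ 2 := sub_pos.mpr ((sq_lt_one_iff_abs_lt_one a).mpr (abs_lt.mpr ha))
  exact ContinuousAt.continuousWithinAt (by fun_prop (disch := positivity))

theorem amplifier_deriv_formula
    (μ : Measure ℝ) [IsProbabilityMeasure μ]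
    (M : ℝ) (hbdd : ∀ᵐ x ∂μ, |x| ≤ M)
    (φ : ℝ → ℝ)
    (hφ : ∀ a ∈ Set.Ioo (-1 : ℝ) 1,
      φ a = ∫ x, x * erf (x * algInv a / Real.sqrt 2) ∂μ) :
    ∀ a ∈ Set.Ioo (-1 : ℝ) 1,
      HasDerivAt φ
        (Real.sqrt 2 / (Real.sqrt π * (1 - a ^ 2) ^ ((3 : ℝ) / 2)) *
          ∫ x, x ^ 2 * Real.exp (-(x ^ 2 * a ^ 2) / (2 * (1 - a ^ 2))) ∂μ) a := by
  intro a ha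
  have hμ : ∀ᵐ x ∂μ, x ∈ Icc (-M) M := hbdd.mono fun x hx => abs_le.mp hx
  have hderiv := hasDerivAt_integral_of_continuousOn_of_ae_mem_compact isCompact_Icc hμ
    isOpen_Ioo ha (fun b _ => by fun_prop) continuousOn_amplifier_deriv_integrand
    fun x b hb => hasDerivAt_mul_erf_algInv x ((sq_lt_one_iff_abs_lt_one b).mpr (abs_lt.mpr hb))
  rw [integral_const_mul] at hderiv
  exact hderiv.congr_of_eventuallyEq (eventually_of_mem (isOpen_Ioo.mem_nhds ha) hφ)
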